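/- arXiv:1711.11229 — 3 statements merged into one kernel-verified Lean document; each statement's English description precedes it below -/
import Mathlib

section
/- Let n ≥ 2 and let 𝔄 : [0,∞) → [0,∞) be a strictly increasing differentiable bijection of [0,∞). Define: 𝔄̂(β) = 1/𝔄(1/β) for β > 0 (and 0 at 0); 𝔄_*⁻¹(σ) = 1/(σ^(1/n)·𝔄⁻¹(σ⁻¹)) for σ > 0 (and 0 at 0); 𝔄̃⁻¹(σ) = σ/𝔄⁻¹(σ) for σ > 0 (and 0 at 0); 𝔄̂̃⁻¹(σ) = σ·𝔄⁻¹(σ⁻¹) for σ > 0 (and 0 at 0). If both 𝔄 and 𝔄⁻¹ satisfy condition Δ_{ℝ⁺}, then each of the functions 𝔄̂, 𝔄_*⁻¹, 𝔄̃⁻¹ and 𝔄̂̃⁻¹ satisfies condition Δ_{ℝ⁺}, and there exists a constant M₀ > 0 such that 𝔄⁻¹(α)·𝔄⁻¹(α⁻¹) ≤ M₀ and α·𝔄⁻¹(𝔄̂(α⁻¹)) ≤ M₀ for all α > 0. -/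
open Set Filter

/-- Condition `Δ_{ℝ⁺}`: there is `M₀ > 0` with `f(αβ) ≤ M₀ f(α) f(β)` for all `α, β > 0`. -/
def DeltaRPlus (f : ℝ → ℝ) : Prop :=
  ∃ M₀ > (0:ℝ), ∀ α > (0:ℝ), ∀ β > (0:ℝ), f (α * β) ≤ M₀ * f α * f β

/-!
If `𝔄` and its inverse both satisfy `Δ_{ℝ⁺}`, then `𝔄` also satisfies the reverse inequality
`𝔄(α) 𝔄(β) ≤ C 𝔄(αβ)`: apply `Δ_{ℝ⁺}` of `𝔄⁻¹` to `𝔄(α) 𝔄(β)` and then the monotone `𝔄`; the same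
holds with the roles of `𝔄` and `𝔄⁻¹` exchanged. Both conditions survive the substitution
`σ ↦ σ⁻¹` and products of positive functions, power functions satisfy both, and taking reciprocals
turns the reverse condition into `Δ_{ℝ⁺}`. Each of the four functions is built in this way. The
reverse condition for `𝔄⁻¹` at `(α, α⁻¹)` gives the first uniform bound, and the second is the
first one at `𝔄(α)`.
-/

def ReverseDeltaRPlus (f : ℝ → ℝ) : Prop :=
  ∃ C > (0:ℝ), ∀ α > (0:ℝ), ∀ β > (0:ℝ), f α * f β ≤ C * f (α * β)

theorem Set.BijOn.Ioi_of_monotoneOn {α : Type*} [PartialOrder α] {f : α → α} {a : α}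
    (hbij : BijOn f (Ici a) (Ici a)) (hf : MonotoneOn f (Ici a)) : BijOn f (Ioi a) (Ioi a) := by
  obtain ⟨x, hx, hfx⟩ := hbij.surjOn (self_mem_Ici : a ∈ Ici a)
  have hfa : f a = a := le_antisymm (hfx ▸ hf self_mem_Ici hx hx) (hbij.mapsTo self_mem_Ici)
  simpa only [Ici_sdiff_left, hfa] using hbij.sdiff_singleton self_mem_Ici

theorem StrictMonoOn.monotoneOn_of_leftInvOn {α β : Type*} [LinearOrder α] [Preorder β]
    {f : α → β} {g : β → α} {s : Set α} {t : Set β} (hf : StrictMonoOn f s) (hg : MapsTo g t s)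
    (hfg : LeftInvOn f g t) : MonotoneOn g t := fun _ ha _ hb hab =>
  (hf.le_iff_le (hg ha) (hg hb)).1 (by rwa [hfg ha, hfg hb])

namespace DeltaRPlus

variable {f g : ℝ → ℝ}

theorem congr (hf : DeltaRPlus f) (h : EqOn f g (Ioi 0)) : DeltaRPlus g := by
  obtain ⟨M, hM, hfM⟩ := hf
  refine ⟨M, hM, fun α hα β hβ => ?_⟩
  rw [← h hα, ← h hβ, ← h (mul_pos hα hβ)]
  exact hfM α hα β hβ

theorem of_map_mul (h : ∀ α > (0:ℝ), ∀ β > (0:ℝ), f (α * β) = f α * f β) : DeltaRPlus f :=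
  ⟨1, one_pos, fun α hα β hβ => by rw [h α hα β hβ, one_mul]⟩

theorem comp_inv (hf : DeltaRPlus f) : DeltaRPlus (fun x => f x⁻¹) := by
  obtain ⟨M, hM, hfM⟩ := hf
  refine ⟨M, hM, fun α hα β hβ => ?_⟩
  simpa only [mul_inv] using hfM _ (inv_pos.2 hα) _ (inv_pos.2 hβ)

theorem mul (hf : DeltaRPlus f) (hg : DeltaRPlus g) (hf0 : ∀ x > (0:ℝ), 0 ≤ f x)
    (hg0 : ∀ x > (0:ℝ), 0 ≤ g x) : DeltaRPlus (fun x => f x * g x) := by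
  obtain ⟨M, hM, hfM⟩ := hf
  obtain ⟨N, hN, hgN⟩ := hg
  refine ⟨M * N, mul_pos hM hN, fun α hα β hβ => ?_⟩
  have hMf : 0 ≤ M * f α * f β := by
    have := hf0 α hα; have := hf0 β hβ; positivity
  calc f (α * β) * g (α * β) ≤ (M * f α * f β) * (N * g α * g β) :=
        mul_le_mul (hfM α hα β hβ) (hgN α hα β hβ) (hg0 _ (mul_pos hα hβ)) hMf
    _ = M * N * (f α * g α) * (f β * g β) := by ring

end DeltaRPlus

namespace ReverseDeltaRPlus

variable {f g : ℝ → ℝ}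

theorem of_map_mul (h : ∀ α > (0:ℝ), ∀ β > (0:ℝ), f (α * β) = f α * f β) :
    ReverseDeltaRPlus f :=
  ⟨1, one_pos, fun α hα β hβ => by rw [h α hα β hβ, one_mul]⟩

theorem comp_inv (hf : ReverseDeltaRPlus f) : ReverseDeltaRPlus (fun x => f x⁻¹) := by
  obtain ⟨C, hC, hfC⟩ := hf
  refine ⟨C, hC, fun α hα β hβ => ?_⟩
  simpa only [mul_inv] using hfC _ (inv_pos.2 hα) _ (inv_pos.2 hβ)

theorem mul (hf : ReverseDeltaRPlus f) (hg : ReverseDeltaRPlus g) (hf0 : ∀ x > (0:ℝ), 0 ≤ f x)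
    (hg0 : ∀ x > (0:ℝ), 0 ≤ g x) : ReverseDeltaRPlus (fun x => f x * g x) := by
  obtain ⟨C, hC, hfC⟩ := hf
  obtain ⟨D, hD, hgD⟩ := hg
  refine ⟨C * D, mul_pos hC hD, fun α hα β hβ => ?_⟩
  have hCf : 0 ≤ C * f (α * β) := mul_nonneg hC.le (hf0 _ (mul_pos hα hβ))
  calc f α * g α * (f β * g β) = (f α * f β) * (g α * g β) := by ring
    _ ≤ (C * f (α * β)) * (D * g (α * β)) :=
        mul_le_mul (hfC α hα β hβ) (hgD α hα β hβ) (mul_nonneg (hg0 α hα) (hg0 β hβ)) hCf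
    _ = C * D * (f (α * β) * g (α * β)) := by ring

theorem one_div (hf : ReverseDeltaRPlus f) (hf0 : MapsTo f (Ioi 0) (Ioi 0)) :
    DeltaRPlus (fun x => 1 / f x) := by
  obtain ⟨C, hC, hfC⟩ := hf
  refine ⟨C, hC, fun α hα β hβ => ?_⟩
  have hfα : 0 < f α := hf0 hα
  have hfβ : 0 < f β := hf0 hβ
  rw [show C * (1 / f α) * (1 / f β) = C / (f α * f β) by ring,
    div_le_div_iff₀ (hf0 (mul_pos hα hβ)) (mul_pos hfα hfβ), one_mul]
  exact hfC α hα β hβ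

theorem exists_mul_inv_le (hf : ReverseDeltaRPlus f) (hf0 : MapsTo f (Ioi 0) (Ioi 0)) :
    ∃ M > (0:ℝ), ∀ α > (0:ℝ), f α * f α⁻¹ ≤ M := by
  obtain ⟨C, hC, hfC⟩ := hf
  refine ⟨C * f 1, mul_pos hC (hf0 (mem_Ioi.2 one_pos)), fun α hα => ?_⟩
  simpa only [mul_inv_cancel₀ hα.ne'] using hfC α hα α⁻¹ (inv_pos.2 hα)

theorem of_invOn (hf : MonotoneOn f (Ioi 0)) (hfg : InvOn f g (Ioi 0) (Ioi 0))
    (hf0 : MapsTo f (Ioi 0) (Ioi 0)) (hg0 : MapsTo g (Ioi 0) (Ioi 0))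
    (hΔf : DeltaRPlus f) (hΔg : DeltaRPlus g) : ReverseDeltaRPlus f := by
  obtain ⟨M, hM, hfM⟩ := hΔf
  obtain ⟨N, hN, hgN⟩ := hΔg
  refine ⟨M * f N, mul_pos hM (hf0 hN), fun α hα β hβ => ?_⟩
  have hprod : 0 < f α * f β := mul_pos (hf0 hα) (hf0 hβ)
  have hg_prod : g (f α * f β) ≤ N * (α * β) := by
    have := hgN _ (hf0 hα) _ (hf0 hβ)
    rwa [hfg.2 hα, hfg.2 hβ, mul_assoc] at this
  calc f α * f β = f (g (f α * f β)) := (hfg.1 hprod).symm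
    _ ≤ f (N * (α * β)) := hf (hg0 hprod) (mul_pos hN (mul_pos hα hβ)) hg_prod
    _ ≤ M * f N * f (α * β) := hfM _ hN _ (mul_pos hα hβ)

end ReverseDeltaRPlus

theorem stmt_4_general (n : ℕ)
    (𝔄 𝔄inv Ahat AstarInv AtilInv AhattilInv : ℝ → ℝ)
    -- `𝔄` is a strictly increasing differentiable bijection of `[0,∞)`
    (h𝔄mono : StrictMonoOn 𝔄 (Set.Ici 0))
    (h𝔄bij : Set.BijOn 𝔄 (Set.Ici 0) (Set.Ici 0))
    (h𝔄inv : ∀ α ≥ (0:ℝ), 𝔄inv (𝔄 α) = α ∧ 𝔄 (𝔄inv α) = α)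
    -- `𝔄̂(β) = 1/𝔄(1/β)` for `β > 0`, and `0` at `0`
    (hAhat : ∀ β > (0:ℝ), Ahat β = 1 / 𝔄 (1 / β))
    -- `𝔄_*⁻¹(σ) = 1/(σ^(1/n)·𝔄⁻¹(σ⁻¹))` for `σ > 0`, and `0` at `0`
    (hAstarInv : ∀ σ > (0:ℝ), AstarInv σ = 1 / (σ ^ ((1:ℝ) / n) * 𝔄inv σ⁻¹))
    -- `𝔄̃⁻¹(σ) = σ/𝔄⁻¹(σ)` for `σ > 0`, and `0` at `0`
    (hAtilInv : ∀ σ > (0:ℝ), AtilInv σ = σ / 𝔄inv σ)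
    -- `𝔄̂̃⁻¹(σ) = σ·𝔄⁻¹(σ⁻¹)` for `σ > 0`, and `0` at `0`
    (hAhattilInv : ∀ σ > (0:ℝ), AhattilInv σ = σ * 𝔄inv σ⁻¹)
    (hd1 : DeltaRPlus 𝔄) (hd2 : DeltaRPlus 𝔄inv) :
    DeltaRPlus Ahat ∧ DeltaRPlus AstarInv ∧ DeltaRPlus AtilInv ∧ DeltaRPlus AhattilInv ∧
    ∃ M₀ > (0:ℝ), ∀ α > (0:ℝ),
      𝔄inv α * 𝔄inv α⁻¹ ≤ M₀ ∧ α * 𝔄inv (Ahat α⁻¹) ≤ M₀ := by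
  have hmono := h𝔄mono.mono Ioi_subset_Ici_self
  have hbij := h𝔄bij.Ioi_of_monotoneOn h𝔄mono.monotoneOn
  have hinv : InvOn 𝔄 𝔄inv (Ioi 0) (Ioi 0) :=
    ⟨fun σ hσ => (h𝔄inv σ (le_of_lt hσ)).2, fun α hα => (h𝔄inv α (le_of_lt hα)).1⟩
  have hA0 := hbij.mapsTo
  have hI0 := (hbij.symm hinv).mapsTo
  have hrA := ReverseDeltaRPlus.of_invOn hmono.monotoneOn hinv hA0 hI0 hd1 hd2
  have hrI := ReverseDeltaRPlus.of_invOn (hmono.monotoneOn_of_leftInvOn hI0 hinv.1) hinv.symm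
    hI0 hA0 hd2 hd1
  have hinv0 : MapsTo (·⁻¹ : ℝ → ℝ) (Ioi 0) (Ioi 0) := fun σ (hσ : 0 < σ) => (inv_pos.2 hσ : 0 < σ⁻¹)
  have hI0' : ∀ σ > (0:ℝ), 0 ≤ 𝔄inv σ⁻¹ := fun σ hσ => le_of_lt (hI0.comp hinv0 hσ)
  have hid := DeltaRPlus.of_map_mul (f := id) fun _ _ _ _ => rfl
  obtain ⟨M, hM, hbound⟩ := hrI.exists_mul_inv_le hI0
  refine ⟨?_, ?_, ?_, ?_, M, hM, fun α hα => ⟨hbound α hα, ?_⟩⟩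
  · refine (hrA.comp_inv.one_div (hA0.comp hinv0)).congr fun β hβ => ?_
    simp only [hAhat β hβ, one_div]
  · have hrpow := ReverseDeltaRPlus.of_map_mul (f := fun σ => σ ^ ((1:ℝ) / n))
      fun a ha b hb => Real.mul_rpow (le_of_lt ha) (le_of_lt hb)
    refine ((hrpow.mul hrI.comp_inv (fun x hx => by positivity) hI0').one_div fun x hx =>
      mul_pos (Real.rpow_pos_of_pos hx _) (hI0.comp hinv0 hx)).congr fun σ hσ => ?_
    exact (hAstarInv σ hσ).symm
  · refine (hid.mul (hrI.one_div hI0) (fun x hx => le_of_lt hx) fun x hx =>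
      le_of_lt (one_div_pos.2 (hI0 hx))).congr fun σ hσ => ?_
    simp only [hAtilInv σ hσ, id, mul_one_div]
  · exact (hid.mul hd2.comp_inv (fun x hx => le_of_lt hx) hI0').congr fun σ hσ =>
      (hAhattilInv σ hσ).symm
  · calc α * 𝔄inv (Ahat α⁻¹) = 𝔄inv (𝔄 α) * 𝔄inv (𝔄 α)⁻¹ := by
          simp only [hAhat _ (inv_pos.2 hα), one_div, inv_inv, hinv.2 hα]
      _ ≤ M := hbound _ (hA0 hα)

theorem stmt_4 (n : ℕ) (hn : 2 ≤ n)
    (𝔄 𝔄inv Ahat AstarInv AtilInv AhattilInv : ℝ → ℝ)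
    -- `𝔄` is a strictly increasing differentiable bijection of `[0,∞)`
    (h𝔄mono : StrictMonoOn 𝔄 (Set.Ici 0))
    (h𝔄diff : DifferentiableOn ℝ 𝔄 (Set.Ici 0))
    (h𝔄bij : Set.BijOn 𝔄 (Set.Ici 0) (Set.Ici 0))
    (h𝔄inv : ∀ α ≥ (0:ℝ), 𝔄inv (𝔄 α) = α ∧ 𝔄 (𝔄inv α) = α)
    -- `𝔄̂(β) = 1/𝔄(1/β)` for `β > 0`, and `0` at `0`
    (hAhat0 : Ahat 0 = 0)
    (hAhat : ∀ β > (0:ℝ), Ahat β = 1 / 𝔄 (1 / β))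
    -- `𝔄_*⁻¹(σ) = 1/(σ^(1/n)·𝔄⁻¹(σ⁻¹))` for `σ > 0`, and `0` at `0`
    (hAstarInv0 : AstarInv 0 = 0)
    (hAstarInv : ∀ σ > (0:ℝ), AstarInv σ = 1 / (σ ^ ((1:ℝ) / n) * 𝔄inv σ⁻¹))
    -- `𝔄̃⁻¹(σ) = σ/𝔄⁻¹(σ)` for `σ > 0`, and `0` at `0`
    (hAtilInv0 : AtilInv 0 = 0)
    (hAtilInv : ∀ σ > (0:ℝ), AtilInv σ = σ / 𝔄inv σ)
    -- `𝔄̂̃⁻¹(σ) = σ·𝔄⁻¹(σ⁻¹)` for `σ > 0`, and `0` at `0`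
    (hAhattilInv0 : AhattilInv 0 = 0)
    (hAhattilInv : ∀ σ > (0:ℝ), AhattilInv σ = σ * 𝔄inv σ⁻¹)
    (hd1 : DeltaRPlus 𝔄) (hd2 : DeltaRPlus 𝔄inv) :
    DeltaRPlus Ahat ∧ DeltaRPlus AstarInv ∧ DeltaRPlus AtilInv ∧ DeltaRPlus AhattilInv ∧
    ∃ M₀ > (0:ℝ), ∀ α > (0:ℝ),
      𝔄inv α * 𝔄inv α⁻¹ ≤ M₀ ∧ α * 𝔄inv (Ahat α⁻¹) ≤ M₀ :=
  stmt_4_general n 𝔄 𝔄inv Ahat AstarInv AtilInv AhattilInv h𝔄mono h𝔄bij h𝔄inv hAhat hAstarInv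
    hAtilInv hAhattilInv hd1 hd2
end

section
/- Let n ≥ 2 and let A : [0,∞) → [0,∞) be a strictly increasing continuous bijection with ∫₀¹ A⁻¹(τ)/τ^((n+1)/n) dτ < ∞, and define A_*⁻¹(s) = ∫₀^s A⁻¹(τ)/τ^((n+1)/n) dτ for s ≥ 0. Suppose there exists a strictly increasing differentiable function 𝔄 : [0,∞) → [0,∞) such that A(α·t) ≥ 𝔄(α)·A(t) for all α ≥ 0 and t ≥ 0. Then for every α > 0 with 𝔄(α) > 0 and every t > 0, (α / 𝔄(α)^(1/n)) · A_*⁻¹( t / 𝔄(α) ) ≥ A_*⁻¹(t). -/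
open Set MeasureTheory

/-!
Substituting `τ = 𝔄(α) x` turns `A_*⁻¹(t)` into
`𝔄(α) ∫₀^{t/𝔄(α)} A⁻¹(𝔄(α) x) / (𝔄(α) x)^((n+1)/n) dx`. Applying `A⁻¹` to
`𝔄(α) A(A⁻¹ x) ≤ A(α A⁻¹ x)` gives `A⁻¹(𝔄(α) x) ≤ α A⁻¹(x)`, so the new integrand is at most
`α 𝔄(α)^(-(n+1)/n)` times the old one, and `𝔄(α) · 𝔄(α)^(-(n+1)/n) = 𝔄(α)^(-1/n)`.
-/

theorem StrictMonoOn.monotoneOn_of_rightInvOn {α β : Type*} [LinearOrder α] [Preorder β]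
    {f : α → β} {g : β → α} {s : Set α} {t : Set β} (hf : StrictMonoOn f s)
    (hg : MapsTo g t s) (hfg : RightInvOn g f t) : MonotoneOn g t := by
  intro a ha b hb hab
  rwa [← hf.le_iff_le (hg ha) (hg hb), hfg ha, hfg hb]

theorem inv_mul_le_mul_inv_of_mul_le {A Ainv : ℝ → ℝ} {α c : ℝ}
    (hmono : MonotoneOn Ainv (Ici 0)) (hmaps : MapsTo Ainv (Ici 0) (Ici 0))
    (hinv : ∀ t ≥ (0:ℝ), Ainv (A t) = t ∧ A (Ainv t) = t) (hα : 0 ≤ α) (hc : 0 ≤ c)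
    (hlow : ∀ u ≥ (0:ℝ), c * A u ≤ A (α * u)) {s : ℝ} (hs : 0 ≤ s) :
    Ainv (c * s) ≤ α * Ainv s := by
  have hu : 0 ≤ Ainv s := hmaps hs
  have hcs : c * s ≤ A (α * Ainv s) := by
    simpa only [(hinv s hs).2] using hlow (Ainv s) hu
  simpa only [(hinv _ (mul_nonneg hα hu)).1] using
    hmono (mul_nonneg hc hs) ((mul_nonneg hc hs).trans hcs) hcs

theorem div_rpow_comp_mul_le {f : ℝ → ℝ} {α c p x : ℝ} (hc : 0 < c) (hx : 0 < x)
    (hf : f (c * x) ≤ α * f x) : f (c * x) / (c * x) ^ p ≤ α / c ^ p * (f x / x ^ p) := by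
  rw [Real.mul_rpow hc.le hx.le, div_mul_div_comm]
  gcongr

theorem integrableOn_Ioc_div_rpow {f : ℝ → ℝ} {p : ℝ} (hf : MonotoneOn f (Ici 1))
    (h01 : IntegrableOn (fun τ => f τ / τ ^ p) (Ioc 0 1)) (T : ℝ) :
    IntegrableOn (fun τ => f τ / τ ^ p) (Ioc 0 T) := by
  have hcont : ContinuousOn (fun τ : ℝ => (τ ^ p)⁻¹) (Icc 1 T) := fun x hx =>
    ((Real.continuousAt_rpow_const x p (Or.inl (by linarith [hx.1]))).inv₀
      (Real.rpow_pos_of_pos (by linarith [hx.1]) p).ne').continuousWithinAt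
  have h1T : IntegrableOn (fun τ => f τ / τ ^ p) (Icc 1 T) := by
    simpa only [div_eq_mul_inv] using
      ((hf.mono Icc_subset_Ici_self).integrableOn_isCompact isCompact_Icc).mul_continuousOn
        hcont isCompact_Icc
  refine (h01.union h1T).mono_set fun x hx => ?_
  rcases le_or_gt x 1 with h | h
  · exact Or.inl ⟨hx.1, h⟩
  · exact Or.inr ⟨h.le, hx.2⟩

theorem setIntegral_Ioc_mul_le {g : ℝ → ℝ} {c K T : ℝ} (hc : 0 < c) (hT : 0 ≤ T)
    (hgcT : IntegrableOn g (Ioc 0 (c * T))) (hgT : IntegrableOn g (Ioc 0 T))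
    (h : ∀ x ∈ Ioc 0 T, g (c * x) ≤ K * g x) :
    ∫ x in Ioc 0 (c * T), g x ≤ c * K * ∫ x in Ioc 0 T, g x := by
  have hcT : 0 ≤ c * T := mul_nonneg hc.le hT
  have hcomp : IntervalIntegrable (fun x => g (c * x)) volume 0 T := by
    simpa only [zero_div, mul_div_cancel_left₀ T hc.ne'] using
      ((intervalIntegrable_iff_integrableOn_Ioc_of_le hcT).mpr hgcT).comp_mul_left (c := c)
  have hK : IntervalIntegrable (fun x => K * g x) volume 0 T :=
    ((intervalIntegrable_iff_integrableOn_Ioc_of_le hT).mpr hgT).const_mul K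
  rw [← intervalIntegral.integral_of_le hT, ← intervalIntegral.integral_of_le hcT]
  calc ∫ x in (0:ℝ)..c * T, g x = c * ∫ x in (0:ℝ)..T, g (c * x) := by
        simpa only [mul_zero, smul_eq_mul] using
          (intervalIntegral.smul_integral_comp_mul_left g c (a := 0) (b := T)).symm
    _ ≤ c * ∫ x in (0:ℝ)..T, K * g x := by
        gcongr
        exact intervalIntegral.integral_mono_on_of_le_Ioo hT hcomp hK
          fun x hx => h x (Ioo_subset_Ioc_self hx)
    _ = c * K * ∫ x in (0:ℝ)..T, g x := by
        rw [intervalIntegral.integral_const_mul, mul_assoc]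

theorem mul_div_rpow_succ_div {n : ℕ} (hn : n ≠ 0) {c : ℝ} (hc : 0 < c) (α : ℝ) :
    c * (α / c ^ ((n + 1 : ℝ) / n)) = α / c ^ ((1:ℝ) / n) := by
  have hsplit : (n + 1 : ℝ) / n = 1 + 1 / n := by field_simp
  rw [hsplit, Real.rpow_add hc, Real.rpow_one]
  field_simp

theorem stmt_8_general (n : ℕ) (hn : 2 ≤ n) (A Ainv : ℝ → ℝ)
    -- `A` is a strictly increasing continuous bijection of `[0,∞)` onto itself
    (hAmono : StrictMonoOn A (Set.Ici 0))
    (hAbij : Set.BijOn A (Set.Ici 0) (Set.Ici 0))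
    (hAinv : ∀ t ≥ (0:ℝ), Ainv (A t) = t ∧ A (Ainv t) = t)
    -- `∫₀¹ A⁻¹(τ)/τ^((n+1)/n) dτ < ∞`
    (hint : IntegrableOn (fun τ => Ainv τ / τ ^ ((n + 1 : ℝ) / n)) (Set.Ioc 0 1))
    (𝔄 : ℝ → ℝ)
    (hlow : ∀ α ≥ (0:ℝ), ∀ t ≥ (0:ℝ), 𝔄 α * A t ≤ A (α * t)) :
    ∀ α > (0:ℝ), 0 < 𝔄 α → ∀ t > (0:ℝ),
      (∫ τ in Set.Ioc (0:ℝ) t, Ainv τ / τ ^ ((n + 1 : ℝ) / n)) ≤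
        (α / 𝔄 α ^ ((1:ℝ) / n)) *
          ∫ τ in Set.Ioc (0:ℝ) (t / 𝔄 α), Ainv τ / τ ^ ((n + 1 : ℝ) / n) := by
  intro α hα hc t ht
  have hmaps : MapsTo Ainv (Ici 0) (Ici 0) :=
    LeftInvOn.mapsTo (fun u hu => (hAinv u hu).1) hAbij.surjOn
  have hmono : MonotoneOn Ainv (Ici 0) :=
    hAmono.monotoneOn_of_rightInvOn hmaps fun u hu => (hAinv u hu).2
  have hintT := integrableOn_Ioc_div_rpow (hmono.mono (Ici_subset_Ici.mpr zero_le_one)) hint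
  have hscaled := setIntegral_Ioc_mul_le hc (div_pos ht hc).le (hintT _) (hintT _)
    fun x hx => div_rpow_comp_mul_le hc hx.1
      (inv_mul_le_mul_inv_of_mul_le hmono hmaps hAinv hα.le hc.le (hlow α hα.le) hx.1.le)
  rwa [mul_div_cancel₀ t hc.ne', mul_div_rpow_succ_div (by omega) hc] at hscaled

theorem stmt_8 (n : ℕ) (hn : 2 ≤ n) (A Ainv : ℝ → ℝ)
    -- `A` is a strictly increasing continuous bijection of `[0,∞)` onto itself
    (hAmono : StrictMonoOn A (Set.Ici 0))
    (hAcont : ContinuousOn A (Set.Ici 0))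
    (hAbij : Set.BijOn A (Set.Ici 0) (Set.Ici 0))
    (hAinv : ∀ t ≥ (0:ℝ), Ainv (A t) = t ∧ A (Ainv t) = t)
    -- `∫₀¹ A⁻¹(τ)/τ^((n+1)/n) dτ < ∞`
    (hint : IntegrableOn (fun τ => Ainv τ / τ ^ ((n + 1 : ℝ) / n)) (Set.Ioc 0 1))
    (𝔄 : ℝ → ℝ)
    (h𝔄nonneg : ∀ α ≥ (0:ℝ), 0 ≤ 𝔄 α)
    (h𝔄mono : StrictMonoOn 𝔄 (Set.Ici 0))
    (h𝔄diff : DifferentiableOn ℝ 𝔄 (Set.Ici 0))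
    (hlow : ∀ α ≥ (0:ℝ), ∀ t ≥ (0:ℝ), 𝔄 α * A t ≤ A (α * t)) :
    ∀ α > (0:ℝ), 0 < 𝔄 α → ∀ t > (0:ℝ),
      (∫ τ in Set.Ioc (0:ℝ) t, Ainv τ / τ ^ ((n + 1 : ℝ) / n)) ≤
        (α / 𝔄 α ^ ((1:ℝ) / n)) *
          ∫ τ in Set.Ioc (0:ℝ) (t / 𝔄 α), Ainv τ / τ ^ ((n + 1 : ℝ) / n) :=
  stmt_8_general n hn A Ainv hAmono hAbij hAinv hint 𝔄 hlow
end

section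
/- Let n ≥ 2 and let 𝔄 : [0,∞) → [0,∞) be a strictly increasing differentiable bijection of [0,∞) satisfying n·𝔄(α) > α·𝔄'(α) > 𝔄(α) for all α > 0, and define 𝔄_*⁻¹(σ) = 1/(σ^(1/n)·𝔄⁻¹(σ⁻¹)) for σ > 0. Suppose there exists a strictly increasing continuous bijection A : [0,∞) → [0,∞) with A(α·t) ≥ 𝔄(α)·A(t) for all α ≥ 0 and t ≥ 0, such that ∫₀¹ A⁻¹(τ)/τ^((n+1)/n) dτ < ∞ and A_*⁻¹(s) = ∫₀^s A⁻¹(τ)/τ^((n+1)/n) dτ tends to +∞ as s → +∞. Then for every μ > 0, 𝔄_*⁻¹(μ)·μ ≤ μ^(1 − 1/n)·𝔄⁻¹(μ). -/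
/-!
Applying `A(αt) ≥ 𝔄(α) A(t)` at `(α, 1/α)` and at `(1/α, 1)` gives
`𝔄(α) 𝔄(1/α) A(1) ≤ 𝔄(α) A(1/α) ≤ A(1)`, so `𝔄(α) 𝔄(1/α) ≤ 1`. Since `𝔄` is increasing this
forces `𝔄⁻¹(μ) 𝔄⁻¹(1/μ) ≥ 1`, and unfolding `𝔄_*⁻¹(μ) μ = μ^(1 - 1/n) / 𝔄⁻¹(1/μ)` this is the claim.
-/

open Set Filter MeasureTheory

section Ici

variable {f : ℝ → ℝ}

theorem StrictMonoOn.map_zero_of_bijOn_Ici (hf : StrictMonoOn f (Ici 0))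
    (hbij : BijOn f (Ici 0) (Ici 0)) : f 0 = 0 := by
  obtain ⟨x, hx, hfx⟩ := hbij.surjOn (self_mem_Ici : (0 : ℝ) ∈ Ici 0)
  rcases (mem_Ici.1 hx).eq_or_lt with rfl | hpos
  · exact hfx
  · have hlt := hf self_mem_Ici hx hpos
    have hnonneg : 0 ≤ f 0 := hbij.mapsTo self_mem_Ici
    linarith

theorem StrictMonoOn.exists_pos_apply_eq_of_bijOn_Ici (hf : StrictMonoOn f (Ici 0))
    (hbij : BijOn f (Ici 0) (Ici 0)) {μ : ℝ} (hμ : 0 < μ) : ∃ a, 0 < a ∧ f a = μ := by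
  obtain ⟨a, ha, hfa⟩ := hbij.surjOn (mem_Ici.2 hμ.le)
  refine ⟨a, (mem_Ici.1 ha).lt_of_ne ?_, hfa⟩
  rintro rfl
  rw [hf.map_zero_of_bijOn_Ici hbij] at hfa
  exact hμ.ne hfa

end Ici

theorem mul_apply_inv_le_one_of_le_apply_mul {𝔄 A : ℝ → ℝ}
    (hlow : ∀ α ≥ (0 : ℝ), ∀ t ≥ (0 : ℝ), 𝔄 α * A t ≤ A (α * t)) (hA1 : 0 < A 1)
    {α : ℝ} (hα : 0 < α) (h𝔄α : 0 ≤ 𝔄 α) : 𝔄 α * 𝔄 α⁻¹ ≤ 1 := by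
  have hα_inv : 𝔄 α * A α⁻¹ ≤ A 1 := by
    simpa [hα.ne'] using hlow α hα.le α⁻¹ (inv_pos.2 hα).le
  have hinv_one : 𝔄 α⁻¹ * A 1 ≤ A α⁻¹ := by
    simpa using hlow α⁻¹ (inv_pos.2 hα).le 1 zero_le_one
  have : 𝔄 α * 𝔄 α⁻¹ * A 1 ≤ 1 * A 1 := by
    rw [mul_assoc, one_mul]
    exact (mul_le_mul_of_nonneg_left hinv_one h𝔄α).trans hα_inv
  exact le_of_mul_le_mul_right this hA1

theorem one_le_mul_of_apply_eq_inv {𝔄 : ℝ → ℝ} (hmono : StrictMonoOn 𝔄 (Ici 0))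
    {μ a b : ℝ} (hμ : 0 < μ) (ha : 0 < a) (hb : 0 ≤ b) (hfa : 𝔄 a = μ) (hfb : 𝔄 b = μ⁻¹)
    (hsub : 𝔄 a * 𝔄 a⁻¹ ≤ 1) : 1 ≤ a * b := by
  by_contra! hlt
  have hb_lt : b < a⁻¹ := by rwa [← mul_one a⁻¹, lt_inv_mul_iff₀ ha]
  have h𝔄b_lt : μ⁻¹ < 𝔄 a⁻¹ := hfb ▸ hmono hb (inv_pos.2 ha).le hb_lt
  have hgt : 1 < μ * 𝔄 a⁻¹ := by
    simpa [hμ.ne'] using mul_lt_mul_of_pos_left h𝔄b_lt hμ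
  rw [hfa] at hsub
  linarith

theorem one_div_rpow_mul_mul_le {μ a b : ℝ} (p : ℝ) (hμ : 0 < μ) (hb : 0 < b)
    (hab : 1 ≤ a * b) : 1 / (μ ^ p * b) * μ ≤ μ ^ (1 - p) * a := by
  have hb_inv : b⁻¹ ≤ a := (inv_le_iff_one_le_mul₀ hb).2 hab
  calc 1 / (μ ^ p * b) * μ = μ ^ (1 - p) * b⁻¹ := by
        rw [Real.rpow_sub hμ, Real.rpow_one]
        field_simp
    _ ≤ μ ^ (1 - p) * a := by gcongr

theorem stmt_10_general (n : ℕ)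
    -- `𝔄` is a strictly increasing differentiable bijection of `[0,∞)`
    (𝔄 𝔄inv 𝔄starInv : ℝ → ℝ)
    (h𝔄mono : StrictMonoOn 𝔄 (Set.Ici 0))
    (h𝔄bij : Set.BijOn 𝔄 (Set.Ici 0) (Set.Ici 0))
    (h𝔄inv : ∀ α ≥ (0:ℝ), 𝔄inv (𝔄 α) = α ∧ 𝔄 (𝔄inv α) = α)
    -- `𝔄_*⁻¹(σ) = 1/(σ^(1/n)·𝔄⁻¹(σ⁻¹))` for `σ > 0`
    (h𝔄starInv : ∀ σ > (0:ℝ), 𝔄starInv σ = 1 / (σ ^ ((1:ℝ) / n) * 𝔄inv σ⁻¹))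
    -- there exists a strictly increasing continuous bijection `A` of `[0,∞)`
    -- with `A(αt) ≥ 𝔄(α)A(t)`, integrable inverse near `0`, and `A_*⁻¹(s) → ∞`
    (A : ℝ → ℝ)
    (hAmono : StrictMonoOn A (Set.Ici 0))
    (hAbij : Set.BijOn A (Set.Ici 0) (Set.Ici 0))
    (hlow : ∀ α ≥ (0:ℝ), ∀ t ≥ (0:ℝ), 𝔄 α * A t ≤ A (α * t)) :
    ∀ μ > (0:ℝ), 𝔄starInv μ * μ ≤ μ ^ (1 - (1:ℝ) / n) * 𝔄inv μ := by
  intro μ hμ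
  have hA1 : 0 < A 1 := by
    simpa [hAmono.map_zero_of_bijOn_Ici hAbij] using
      hAmono self_mem_Ici (mem_Ici.2 zero_le_one) zero_lt_one
  obtain ⟨a, ha, hfa⟩ := h𝔄mono.exists_pos_apply_eq_of_bijOn_Ici h𝔄bij hμ
  obtain ⟨b, hb, hfb⟩ := h𝔄mono.exists_pos_apply_eq_of_bijOn_Ici h𝔄bij (inv_pos.2 hμ)
  have hinv_a : 𝔄inv μ = a := hfa ▸ (h𝔄inv a ha.le).1
  have hinv_b : 𝔄inv μ⁻¹ = b := hfb ▸ (h𝔄inv b hb.le).1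
  rw [h𝔄starInv μ hμ, hinv_a, hinv_b]
  exact one_div_rpow_mul_mul_le _ hμ hb
    (one_le_mul_of_apply_eq_inv h𝔄mono hμ ha hb.le hfa hfb
      (mul_apply_inv_le_one_of_le_apply_mul hlow hA1 ha (h𝔄bij.mapsTo (mem_Ici.2 ha.le))))

theorem stmt_10 (n : ℕ) (hn : 2 ≤ n)
    -- `𝔄` is a strictly increasing differentiable bijection of `[0,∞)`
    (𝔄 𝔄' 𝔄inv 𝔄starInv : ℝ → ℝ)
    (h𝔄mono : StrictMonoOn 𝔄 (Set.Ici 0))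
    (h𝔄bij : Set.BijOn 𝔄 (Set.Ici 0) (Set.Ici 0))
    (h𝔄deriv : ∀ α ∈ Set.Ici (0:ℝ), HasDerivWithinAt 𝔄 (𝔄' α) (Set.Ici 0) α)
    (h𝔄inv : ∀ α ≥ (0:ℝ), 𝔄inv (𝔄 α) = α ∧ 𝔄 (𝔄inv α) = α)
    -- `n·𝔄(α) > α·𝔄'(α) > 𝔄(α)` for all `α > 0`
    (hcond : ∀ α > (0:ℝ), 𝔄 α < α * 𝔄' α ∧ α * 𝔄' α < n * 𝔄 α)
    -- `𝔄_*⁻¹(σ) = 1/(σ^(1/n)·𝔄⁻¹(σ⁻¹))` for `σ > 0`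
    (h𝔄starInv0 : 𝔄starInv 0 = 0)
    (h𝔄starInv : ∀ σ > (0:ℝ), 𝔄starInv σ = 1 / (σ ^ ((1:ℝ) / n) * 𝔄inv σ⁻¹))
    -- there exists a strictly increasing continuous bijection `A` of `[0,∞)`
    -- with `A(αt) ≥ 𝔄(α)A(t)`, integrable inverse near `0`, and `A_*⁻¹(s) → ∞`
    (A Ainv : ℝ → ℝ)
    (hAmono : StrictMonoOn A (Set.Ici 0))
    (hAcont : ContinuousOn A (Set.Ici 0))
    (hAbij : Set.BijOn A (Set.Ici 0) (Set.Ici 0))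
    (hAinv : ∀ t ≥ (0:ℝ), Ainv (A t) = t ∧ A (Ainv t) = t)
    (hlow : ∀ α ≥ (0:ℝ), ∀ t ≥ (0:ℝ), 𝔄 α * A t ≤ A (α * t))
    (hint : IntegrableOn (fun τ => Ainv τ / τ ^ ((n + 1 : ℝ) / n)) (Set.Ioc 0 1))
    (hAstarInfty : Tendsto
      (fun s => ∫ τ in Set.Ioc (0:ℝ) s, Ainv τ / τ ^ ((n + 1 : ℝ) / n)) atTop atTop) :
    ∀ μ > (0:ℝ), 𝔄starInv μ * μ ≤ μ ^ (1 - (1:ℝ) / n) * 𝔄inv μ :=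
  stmt_10_general n 𝔄 𝔄inv 𝔄starInv h𝔄mono h𝔄bij h𝔄inv h𝔄starInv A hAmono hAbij hlow
end
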